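/- arXiv:math/0501247 — 5 statements merged into one kernel-verified Lean document; each statement's English description precedes it below -/
import Mathlib

section
/- Let A be an associative algebra over a field k of characteristic p > 2. Let A_{(1)} = A and A_{(k)} = [A, A_{(k-1)}] denote the lower central series with respect to the commutator. If A_{(p)} = 0, then for all x, y ∈ A one has (x+y)^p = x^p + y^p. -/
open Polynomial Finset

section Helpers

variable {R : Type*} [Ring R]

/-- In characteristic `p`, `(p-1).choose j = (-1)^j`. -/
lemma choose_sub_one_cast {p : ℕ} (hp : p.Prime) [CharP R p] :
    ∀ j, j ≤ p - 1 → (((p - 1).choose j : ℕ) : R) = (-1) ^ j := by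
  intro j
  induction j with
  | zero => simp
  | succ j ih =>
    intro hj
    have hj' : j ≤ p - 1 := by omega
    have hpos : 0 < p := hp.pos
    have hpascal : p.choose (j + 1) = (p - 1).choose j + (p - 1).choose (j + 1) := by
      conv_lhs => rw [← Nat.succ_pred_eq_of_pos hpos]
      exact Nat.choose_succ_succ _ j
    have hdvd : p ∣ p.choose (j + 1) :=
      hp.dvd_choose_self (Nat.succ_ne_zero j) (by omega)
    have hzero : ((p.choose (j + 1) : ℕ) : R) = 0 :=
      (CharP.cast_eq_zero_iff R p _).mpr hdvd
    have hc := congrArg (fun n : ℕ => (n : R)) hpascal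
    simp only [Nat.cast_add, hzero, ih hj'] at hc
    have h2 : ((p - 1).choose (j + 1) : R) = -(-1) ^ j :=
      eq_neg_of_add_eq_zero_right hc.symm
    rw [h2, pow_succ, mul_neg_one]

/-- In char `p` odd prime, `∑ j < p, a^j * b * a^(p-1-j) = (ad a)^[p-1] b`. -/
lemma sum_conj_eq_iterate {p : ℕ} (hp : p.Prime) (hodd : Odd p) [CharP R p] (a b : R) :
    ∑ j ∈ Finset.range p, a ^ j * b * a ^ (p - 1 - j) =
      (fun z => a * z - z * a)^[p - 1] b := by
  set L : Module.End ℤ R := LinearMap.mulLeft ℤ a with hL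
  set Rr : Module.End ℤ R := LinearMap.mulRight ℤ a with hRr
  have hC : Commute L (-Rr) := by
    apply Commute.neg_right
    ext z
    simp [hL, hRr, Module.End.mul_apply, mul_assoc]
  have key : (L - Rr) ^ (p - 1) =
      ∑ m ∈ Finset.range p, L ^ m * (-Rr) ^ (p - 1 - m) * ((p - 1).choose m : Module.End ℤ R) := by
    have h := hC.add_pow (p - 1)
    rw [sub_eq_add_neg, h]
    congr 1
    rw [Nat.sub_add_cancel hp.one_lt.le]
  have hiter : ∀ (m : ℕ) (c : R), ((L - Rr) ^ m) c = (fun z => a * z - z * a)^[m] c := by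
    intro m
    induction m with
    | zero => intro c; simp
    | succ m ih =>
      intro c
      have harg : (L - Rr) c = a * c - c * a := by
        simp [hL, hRr]
      rw [pow_succ, Module.End.mul_apply, harg, ih, Function.iterate_succ_apply]
  have hEvenp1 : Even (p - 1) := Nat.Odd.sub_odd hodd odd_one
  have happ : ∀ m ∈ Finset.range p,
      (L ^ m * (-Rr) ^ (p - 1 - m) * ((p - 1).choose m : Module.End ℤ R)) b
        = a ^ m * b * a ^ (p - 1 - m) := by
    intro m hm
    have hm' : m ≤ p - 1 := by
      have := Finset.mem_range.mp hm; omega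
    have hneg : (-Rr) = LinearMap.mulRight ℤ (-a) := by
      ext z; simp [hRr]
    rw [Module.End.mul_apply, Module.End.mul_apply, Module.End.natCast_apply,
      hneg, LinearMap.pow_mulRight, LinearMap.mulRight_apply,
      hL, LinearMap.pow_mulLeft, LinearMap.mulLeft_apply]
    rw [smul_mul_assoc, mul_smul_comm, nsmul_eq_mul]
    rw [choose_sub_one_cast hp m hm']
    rcases Nat.even_or_odd m with hme | hmo
    · have hse : Even (p - 1 - m) := by
        rw [Nat.even_sub hm']
        simp [hEvenp1, hme]
      rw [hme.neg_one_pow, hse.neg_pow]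
      simp [mul_assoc]
    · have hso : ¬ Even (p - 1 - m) := by
        rw [Nat.even_sub hm']
        simp [hEvenp1, Nat.not_even_iff_odd.mpr hmo]
      have hso' : Odd (p - 1 - m) := Nat.not_even_iff_odd.mp hso
      rw [hmo.neg_one_pow, hso'.neg_pow]
      simp [mul_assoc]
  calc ∑ j ∈ Finset.range p, a ^ j * b * a ^ (p - 1 - j)
      = ∑ m ∈ Finset.range p,
          (L ^ m * (-Rr) ^ (p - 1 - m) * ((p - 1).choose m : Module.End ℤ R)) b :=
        (Finset.sum_congr rfl happ).symm
    _ = ((L - Rr) ^ (p - 1)) b := by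
        rw [key]
        simp [LinearMap.sum_apply]
    _ = (fun z => a * z - z * a)^[p - 1] b := hiter _ b

/-- Leibniz rule for powers in a noncommutative polynomial ring. -/
lemma derivative_pow_noncomm (f : R[X]) :
    ∀ n : ℕ, derivative (f ^ n) = ∑ j ∈ Finset.range n, f ^ j * derivative f * f ^ (n - 1 - j) := by
  intro n
  induction n with
  | zero => simp
  | succ n ih =>
    rw [pow_succ', derivative_mul, ih, Finset.mul_sum, Finset.sum_range_succ', add_comm]
    congr 1
    · apply Finset.sum_congr rfl
      intro i hi
      have h1 : n + 1 - 1 - (i + 1) = n - 1 - i := by omega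
      rw [h1, pow_succ']
      simp only [mul_assoc]
    · have h2 : n + 1 - 1 - 0 = n := by omega
      rw [h2, pow_zero, one_mul]

/-- coeff 0 of a power. -/
lemma coeff_zero_pow' (f : R[X]) (n : ℕ) : (f ^ n).coeff 0 = (f.coeff 0) ^ n := by
  induction n with
  | zero => simp
  | succ n ih => rw [pow_succ, pow_succ, Polynomial.mul_coeff_zero, ih]

/-- top coeff of a power of a polynomial of degree ≤ 1. -/
lemma coeff_pow_self (f : R[X]) (hf : f.natDegree ≤ 1) (n : ℕ) :
    (f ^ n).coeff n = (f.coeff 1) ^ n := by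
  induction n with
  | zero => simp
  | succ n ih =>
    have hdegn : (f ^ n).natDegree ≤ n := by
      calc (f ^ n).natDegree ≤ n * f.natDegree := Polynomial.natDegree_pow_le
        _ ≤ n * 1 := Nat.mul_le_mul_left _ hf
        _ = n := mul_one n
    rw [pow_succ', Polynomial.coeff_mul, Finset.Nat.sum_antidiagonal_eq_sum_range_succ_mk]
    dsimp only
    rw [Finset.sum_eq_single 1]
    · rw [Nat.add_sub_cancel, ih, pow_succ']
    · intro i hi hne
      rcases Nat.lt_or_ge i 2 with h2 | h2
      · interval_cases i
        · have hdeg : (f ^ n).natDegree < n + 1 - 0 := by omega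
          rw [Polynomial.coeff_eq_zero_of_natDegree_lt hdeg, mul_zero]
        · omega
      · rw [Polynomial.coeff_eq_zero_of_natDegree_lt (lt_of_le_of_lt hf (by omega)), zero_mul]
    · intro h
      exact absurd (Finset.mem_range.mpr (by omega)) h

end Helpers

/-- The lower central series of an associative `k`-algebra with respect to the
commutator: `lcs k A 1 = A`, and `lcs k A (n+1)` is the `k`-linear span of
commutators `[a, c] = a*c - c*a` with `a ∈ A` and `c ∈ lcs k A n`. -/
def lcs (k A : Type*) [Field k] [Ring A] [Algebra k A] : ℕ → Submodule k A
  | 0 => ⊤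
  | 1 => ⊤
  | (n + 2) =>
      Submodule.span k {z : A | ∃ a c : A, c ∈ lcs k A (n + 1) ∧ z = a * c - c * a}

section LCS

variable {k A : Type*} [Field k] [Ring A] [Algebra k A]

lemma bracket_mem_lcs {n : ℕ} (hn : 1 ≤ n) {c : A} (hc : c ∈ lcs k A n) (a : A) :
    a * c - c * a ∈ lcs k A (n + 1) := by
  obtain ⟨m, rfl⟩ : ∃ m, n = m + 1 := ⟨n - 1, by omega⟩
  show _ ∈ lcs k A (m + 2)
  rw [lcs]
  exact Submodule.subset_span ⟨a, c, hc, rfl⟩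

lemma coeff_bracket_mem (x y : A) {n : ℕ} (hn : 1 ≤ n) {g : A[X]}
    (hg : ∀ m, g.coeff m ∈ lcs k A n) (m : ℕ) :
    ((C x * X + C y) * g - g * (C x * X + C y)).coeff m ∈ lcs k A (n + 1) := by
  have hrw : (C x * X + C y) * g - g * (C x * X + C y)
      = (C x * (X * g) - (g * C x) * X) + (C y * g - g * C y) := by
    noncomm_ring
  rw [hrw]
  cases m with
  | zero =>
    have h1 : ((C x * (X * g) - g * C x * X) + (C y * g - g * C y)).coeff 0
        = y * g.coeff 0 - g.coeff 0 * y := by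
      simp [Polynomial.coeff_add, Polynomial.coeff_sub, Polynomial.coeff_C_mul,
        Polynomial.coeff_mul_C, Polynomial.mul_coeff_zero]
    rw [h1]
    exact bracket_mem_lcs hn (hg 0) y
  | succ m' =>
    have h1 : ((C x * (X * g) - g * C x * X) + (C y * g - g * C y)).coeff (m' + 1)
        = (x * g.coeff m' - g.coeff m' * x) + (y * g.coeff (m' + 1) - g.coeff (m' + 1) * y) := by
      simp [Polynomial.coeff_add, Polynomial.coeff_sub, Polynomial.coeff_C_mul,
        Polynomial.coeff_mul_C, Polynomial.coeff_X_mul, Polynomial.coeff_mul_X]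
    rw [h1]
    exact add_mem (bracket_mem_lcs hn (hg m') x) (bracket_mem_lcs hn (hg (m' + 1)) y)

lemma iterate_coeff_mem (x y : A) :
    ∀ (m : ℕ) (n : ℕ),
      ((fun z => (C x * X + C y) * z - z * (C x * X + C y))^[m] (C x)).coeff n
        ∈ lcs k A (m + 1) := by
  intro m
  induction m with
  | zero =>
    intro n
    show _ ∈ lcs k A 1
    rw [lcs]
    trivial
  | succ m ih =>
    intro n
    rw [Function.iterate_succ_apply']
    exact coeff_bracket_mem x y (by omega) ih n

end LCS

/-- Let `A` be an associative algebra over a field `k` of characteristic `p > 2`,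
with lower central series `A_(1) = A`, `A_(k) = [A, A_(k-1)]`.  If `A_(p) = 0`,
then `(x + y)^p = x^p + y^p` for all `x, y ∈ A`. -/
theorem statement0 {k A : Type*} [Field k] [Ring A] [Algebra k A]
    {p : ℕ} (hp : p.Prime) (hp2 : 2 < p) [CharP k p]
    (hlcs : lcs k A p = ⊥) :
    ∀ x y : A, (x + y) ^ p = x ^ p + y ^ p := by
  intro x y
  rcases subsingleton_or_nontrivial A with hA | hA
  · exact Subsingleton.elim _ _
  haveI : CharP A p := charP_of_injective_algebraMap (algebraMap k A).injective p
  haveI : CharP A[X] p := inferInstance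
  have hodd : Odd p := hp.odd_of_ne_two (by omega)
  set f : A[X] := C x * X + C y with hf
  have hdf : derivative f = C x := by
    rw [hf]
    simp [derivative_C_mul]
  have hzero : (fun z => f * z - z * f)^[p - 1] (C x) = 0 := by
    ext n
    have h := iterate_coeff_mem (k := k) x y (p - 1) n
    rw [Nat.sub_add_cancel hp.one_lt.le, hlcs] at h
    simpa using h
  have hD : derivative (f ^ p) = 0 := by
    rw [derivative_pow_noncomm, hdf, sum_conj_eq_iterate hp hodd f (C x), hzero]
  -- middle coefficients vanish
  have hcoeff : ∀ i, i ≠ 0 → i ≠ p → (f ^ p).coeff i = 0 := by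
    intro i h0 hip
    rcases Nat.lt_or_ge i p with hlt | hge
    · obtain ⟨i', rfl⟩ : ∃ i', i = i' + 1 := ⟨i - 1, by omega⟩
      have hd' : (derivative (f ^ p)).coeff i' = 0 := by rw [hD]; simp
      rw [Polynomial.coeff_derivative] at hd'
      set i : ℕ := i' + 1 with hi
      have hcast : ((i' : ℕ) : A) + 1 = ((i : ℕ) : A) := by
        rw [hi, Nat.cast_add, Nat.cast_one]
      rw [hcast] at hd'
      have hik : ((i : ℕ) : k) ≠ 0 := by
        intro hzero'
        have := (CharP.cast_eq_zero_iff k p i).mp hzero'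
        have := Nat.le_of_dvd (by omega) this
        omega
      have halg : ((i : ℕ) : A) = algebraMap k A ((i : ℕ) : k) := by
        simp
      have hcomm : (f ^ p).coeff i * ((i : ℕ) : A) = ((i : ℕ) : k) • (f ^ p).coeff i := by
        rw [halg, ← Algebra.commutes, ← Algebra.smul_def]
      rw [hcomm] at hd'
      have : (f ^ p).coeff i = ((i : ℕ) : k)⁻¹ • (((i : ℕ) : k) • (f ^ p).coeff i) := by
        rw [smul_smul, inv_mul_cancel₀ hik, one_smul]
      rw [this, hd', smul_zero]
    · have h1 : f.natDegree ≤ 1 := by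
        apply le_trans (Polynomial.natDegree_add_le _ _)
        simp [Polynomial.natDegree_C]
        apply le_trans (Polynomial.natDegree_mul_le)
        simp
      have hdeg : (f ^ p).natDegree < i := by
        have h2 : (f ^ p).natDegree ≤ p := by
          calc (f ^ p).natDegree ≤ p * f.natDegree := Polynomial.natDegree_pow_le
            _ ≤ p * 1 := Nat.mul_le_mul_left _ h1
            _ = p := mul_one p
        omega
      exact Polynomial.coeff_eq_zero_of_natDegree_lt hdeg
  have hc0 : (f ^ p).coeff 0 = y ^ p := by
    rw [coeff_zero_pow']
    congr 1
    simp [hf]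
  have hcp : (f ^ p).coeff p = x ^ p := by
    have h1 : f.natDegree ≤ 1 := by
      apply le_trans (Polynomial.natDegree_add_le _ _)
      simp [Polynomial.natDegree_C]
      apply le_trans (Polynomial.natDegree_mul_le)
      simp
    rw [coeff_pow_self f h1]
    congr 1
    simp [hf]
  have hfp : f ^ p = C (y ^ p) + C (x ^ p) * X ^ p := by
    ext n
    rw [Polynomial.coeff_add, Polynomial.coeff_C_mul, Polynomial.coeff_X_pow, Polynomial.coeff_C]
    rcases eq_or_ne n 0 with rfl | hn0
    · have h0p : ¬ ((0 : ℕ) = p) := by omega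
      rw [hc0]
      simp [h0p]
    rcases eq_or_ne n p with rfl | hnp
    · rw [hcp]
      simp [hn0]
    · rw [hcoeff n hn0 hnp]
      simp [hn0, hnp]
  -- evaluate at 1
  let φ : A[X] →+* A := Polynomial.eval₂RingHom' (RingHom.id A) 1 (fun a => Commute.one_right a)
  have hφC : ∀ a : A, φ (C a) = a := fun a => by
    have h : φ (C a) = eval₂ (RingHom.id A) 1 (C a) := rfl
    rw [h, Polynomial.eval₂_C, RingHom.id_apply]
  have hφX : φ X = 1 := by
    have h : φ X = eval₂ (RingHom.id A) 1 X := rfl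
    rw [h, Polynomial.eval₂_X]
  have h1 : φ (f ^ p) = (x + y) ^ p := by
    rw [map_pow]
    congr 1
    rw [hf, map_add, map_mul, hφC, hφC, hφX, mul_one]
  have h2 : φ (f ^ p) = y ^ p + x ^ p := by
    rw [hfp, map_add φ, map_mul φ, map_pow φ, hφC, hφC, hφX, one_pow, mul_one]
  rw [← h1, h2, add_comm]
end

section
/- Let A be an associative algebra over a field k of characteristic p > 2 with lower central series A_{(k)} (A_{(1)} = A, A_{(k)} = [A, A_{(k-1)}]). If A_{(p)} = 0 and every element of A_{(2)} has vanishing p-th power, then for all x, y ∈ A one has (xy)^p = x^p y^p. -/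
open Polynomial LieAlgebra Finset

attribute [local instance] LieRing.ofAssociativeRing

section CharP

variable {R : Type*} [Ring R] {p : ℕ} [CharP R p]

theorem Nat.Prime.cast_choose_sub_one (hp : p.Prime) {j : ℕ} (hj : j < p) :
    ((p - 1).choose j : R) = (-1) ^ j := by
  induction j with
  | zero => simp
  | succ j ih =>
    have hpascal := Nat.choose_succ_succ' (p - 1) j
    rw [Nat.sub_add_cancel hp.one_le] at hpascal
    have hdvd : ((p.choose (j + 1) : ℕ) : R) = 0 :=
      (CharP.cast_eq_zero_iff R p _).mpr (hp.dvd_choose_self j.succ_ne_zero hj)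
    rw [hpascal, Nat.cast_add, ih (by omega)] at hdvd
    rw [pow_succ, mul_neg_one, eq_neg_of_add_eq_zero_right hdvd]

theorem neg_one_pow_char_sub_one (hp : p.Prime) : (-1 : R) ^ (p - 1) = 1 := by
  have := Fact.mk hp
  have h := neg_one_pow_char R p
  rw [← Nat.sub_add_cancel hp.one_le, pow_succ, mul_neg_one, neg_inj] at h
  exact h

theorem Commute.sub_pow_char_sub_one {x y : R} (h : Commute x y) (hp : p.Prime) :
    (x - y) ^ (p - 1) = ∑ j ∈ range p, x ^ j * y ^ (p - 1 - j) := by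
  rw [sub_eq_add_neg, h.neg_right.add_pow, Nat.sub_add_cancel hp.one_le]
  refine sum_congr rfl fun j hj => ?_
  have hj : j < p := mem_range.mp hj
  rw [hp.cast_choose_sub_one hj, neg_pow', mul_assoc, mul_assoc, ← pow_add,
    Nat.sub_add_cancel (by omega), neg_one_pow_char_sub_one hp, mul_one]

end CharP

section Ad

variable {k S : Type*} [Field k] [Ring S] [Algebra k S] {p : ℕ} [CharP k p]

theorem ad_pow_char_sub_one_apply (hp : p.Prime) (u z : S) :
    (ad k S u ^ (p - 1)) z = ∑ j ∈ range p, u ^ j * z * u ^ (p - 1 - j) := by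
  nontriviality S
  have := charP_of_injective_algebraMap (algebraMap k (Module.End k S)).injective p
  rw [congrFun (ad_eq_lmul_left_sub_lmul_right (R := k) S) u, Pi.sub_apply,
    (LinearMap.commute_mulLeft_right u u).sub_pow_char_sub_one hp]
  simp [LinearMap.sum_apply, LinearMap.pow_mulLeft, LinearMap.pow_mulRight, mul_assoc]

theorem ad_pow_char_apply (hp : p.Prime) (u z : S) :
    (ad k S u ^ p) z = u ^ p * z - z * u ^ p := by
  nontriviality S
  have := charP_of_injective_algebraMap (algebraMap k (Module.End k S)).injective p
  have := Fact.mk hp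
  rw [congrFun (ad_eq_lmul_left_sub_lmul_right (R := k) S) u, Pi.sub_apply,
    sub_pow_char_of_commute _ (LinearMap.commute_mulLeft_right u u)]
  simp [LinearMap.pow_mulLeft, LinearMap.pow_mulRight]

end Ad

section LowerCentralSeries

variable {k A : Type*} [Field k] [Ring A] [Algebra k A]

theorem commutator_mem_lcs {n : ℕ} (a : A) {c : A} (hc : c ∈ lcs k A (n + 1)) :
    a * c - c * a ∈ lcs k A (n + 2) :=
  Submodule.subset_span ⟨a, c, hc, rfl⟩

theorem ad_pow_apply_mem_lcs (u z : A) : ∀ n : ℕ, (ad k A u ^ n) z ∈ lcs k A (n + 1)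
  | 0 => Submodule.mem_top
  | n + 1 => by
    rw [pow_succ', Module.End.mul_apply, ad_apply, Ring.lie_def]
    exact commutator_mem_lcs u (ad_pow_apply_mem_lcs u z n)

theorem coeff_mem_lcs : ∀ {n : ℕ} {f : A[X]}, f ∈ lcs k A[X] n → ∀ i, f.coeff i ∈ lcs k A n
  | 0, _, _, _ => Submodule.mem_top
  | 1, _, _, _ => Submodule.mem_top
  | n + 2, f, hf, i => by
    induction hf using Submodule.span_induction with
    | mem g hg =>
      obtain ⟨a, c, hc, rfl⟩ := hg
      rw [coeff_sub, coeff_mul, coeff_mul, ← Nat.sum_antidiagonal_swap, ← sum_sub_distrib]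
      exact Submodule.sum_mem _ fun x _ => commutator_mem_lcs _ (coeff_mem_lcs hc _)
    | zero => simp
    | add f g _ _ hf hg => simpa only [coeff_add] using add_mem hf hg
    | smul c f _ hf => simpa only [coeff_smul] using Submodule.smul_mem _ c hf

end LowerCentralSeries

theorem Polynomial.derivative_pow_eq_sum {R : Type*} [Semiring R] (f : R[X]) (n : ℕ) :
    derivative (f ^ n) = ∑ j ∈ range n, f ^ j * derivative f * f ^ (n - 1 - j) := by
  induction n with
  | zero => simp
  | succ n ih =>
    rw [pow_succ, derivative_mul, ih, sum_range_succ, sum_mul, Nat.add_sub_cancel,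
      Nat.sub_self, pow_zero, mul_one]
    congr 1
    refine sum_congr rfl fun j hj => ?_
    have := mem_range.mp hj
    rw [mul_assoc, ← pow_succ, show n - 1 - j + 1 = n - j by omega]

theorem Polynomial.coeff_eq_zero_of_derivative_eq_zero {k A : Type*} [Field k] [Ring A]
    [Algebra k A] {f : A[X]} (hf : derivative f = 0) {n : ℕ} (hn : (n : k) ≠ 0) :
    f.coeff n = 0 := by
  obtain ⟨m, rfl⟩ : ∃ m, n = m + 1 := Nat.exists_eq_succ_of_ne_zero (by rintro rfl; simp at hn)
  have h := congrArg (coeff · m) hf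
  simp only [coeff_derivative, coeff_zero] at h
  have hunit : IsUnit ((m : A) + 1) := by
    simpa [map_natCast] using (Ne.isUnit hn).map (algebraMap k A)
  exact hunit.mul_left_eq_zero.mp h

section FrobeniusAdditive

variable {k A : Type*} [Field k] [Ring A] [Algebra k A] {p : ℕ} [CharP k p]

theorem derivative_linear_pow_char_eq_zero (hp : p.Prime) (hlcs : lcs k A p = ⊥) (a b : A) :
    derivative ((C a * X + C b) ^ p) = 0 := by
  ext i
  have hmem := coeff_mem_lcs (ad_pow_apply_mem_lcs (k := k) (C a * X + C b) (C a) (p - 1)) i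
  rw [Nat.sub_add_cancel hp.one_le, hlcs, Submodule.mem_bot,
    ad_pow_char_sub_one_apply hp] at hmem
  simpa [derivative_pow_eq_sum] using hmem

theorem add_pow_char_of_lcs_eq_bot (hp : p.Prime) (hlcs : lcs k A p = ⊥) (a b : A) :
    (a + b) ^ p = a ^ p + b ^ p := by
  set u : A[X] := C a * X + C b
  have hu : u ^ p = C (a ^ p) * X ^ p + C (b ^ p) := by
    ext j
    rw [coeff_add, coeff_C_mul_X_pow, coeff_C]
    rcases Nat.lt_or_ge j p with hj | hj
    · rcases Nat.eq_zero_or_pos j with rfl | hj0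
      · rw [← constantCoeff_apply, map_pow, constantCoeff_apply]
        simp [u, hp.ne_zero.symm]
      · rw [coeff_eq_zero_of_derivative_eq_zero (k := k)
          (derivative_linear_pow_char_eq_zero hp hlcs a b)]
        · simp [hj.ne, hj0.ne']
        · rw [Ne, CharP.cast_eq_zero_iff k p]
          exact Nat.not_dvd_of_pos_of_lt hj0 hj
    · rw [coeff_pow_eq_ite_of_natDegree_le_of_le natDegree_linear_le (by omega : p * 1 ≤ j)]
      have hj0 : j ≠ 0 := (hp.pos.trans_le hj).ne'
      simp [hj0]
  let ψ : A[X] →+* A := eval₂RingHom' (RingHom.id A) 1 fun _ => Commute.one_right _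
  have hψC (c : A) : ψ (C c) = c := by simp [ψ]
  have hψX : ψ X = 1 := by simp [ψ]
  calc (a + b) ^ p = ψ (u ^ p) := by rw [map_pow, map_add, map_mul, hψC, hψC, hψX, mul_one]
    _ = a ^ p + b ^ p := by rw [hu, map_add, map_mul, hψC, hψC, map_pow, hψX, one_pow, mul_one]

theorem commute_pow_char_of_lcs_eq_bot (hp : p.Prime) (hlcs : lcs k A p = ⊥) (a y : A) :
    Commute (a ^ p) y := by
  have hzero : (ad k A a ^ (p - 1)) y = 0 := by
    simpa [Nat.sub_add_cancel hp.one_le, hlcs] using ad_pow_apply_mem_lcs (k := k) a y (p - 1)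
  refine sub_eq_zero.mp ?_
  calc a ^ p * y - y * a ^ p = (ad k A a ^ (p - 1 + 1)) y := by
        rw [Nat.sub_add_cancel hp.one_le, ad_pow_char_apply hp]
    _ = 0 := by rw [pow_succ', Module.End.mul_apply, hzero, map_zero]

end FrobeniusAdditive

section MulPow

variable {A : Type*} [Ring A] {n : ℕ}

theorem mul_pow_comm_of_add_pow (hadd : ∀ a b : A, (a + b) ^ n = a ^ n + b ^ n) {x y : A}
    (hxy : (x * y - y * x) ^ n = 0) : (x * y) ^ n = (y * x) ^ n := by
  rw [← sub_add_cancel (x * y) (y * x), hadd, hxy, zero_add]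

theorem mul_pow_of_add_pow_of_commute_pow {k : Type*} [Field k] [Algebra k A] (h2 : (2 : k) ≠ 0)
    (hadd : ∀ a b : A, (a + b) ^ n = a ^ n + b ^ n) (hcomm : ∀ a b : A, Commute (a ^ n) b)
    (hswap : ∀ a b : A, (a * b) ^ n = (b * a) ^ n) (x y : A) :
    (x * y) ^ n = x ^ n * y ^ n := by
  have hsq (a : A) : (a * a) ^ n = a ^ n * a ^ n := by
    rw [← sq, ← pow_mul, mul_comm, pow_mul, sq]
  have hleft : ((x + y) * (x + y)) ^ n = (x * x) ^ n + (y * y) ^ n + 2 • (x * y) ^ n := by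
    rw [add_mul, mul_add, mul_add, hadd, hadd, hadd, hswap y x]
    abel
  have hright : ((x + y) * (x + y)) ^ n = (x * x) ^ n + (y * y) ^ n + 2 • (x ^ n * y ^ n) := by
    rw [hsq, hadd, add_mul, mul_add, mul_add, (hcomm y (x ^ n)).eq, hsq, hsq]
    abel
  have htwo : 2 • (x * y) ^ n = 2 • (x ^ n * y ^ n) := add_left_cancel (hleft.symm.trans hright)
  apply smul_right_injective A h2
  simpa only [two_smul, two_nsmul] using htwo

end MulPow

/-- Let `A` be an associative algebra over a field `k` of characteristic `p > 2`,
with lower central series `A_(1) = A`, `A_(k) = [A, A_(k-1)]`.  If `A_(p) = 0`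
and every element of `A_(2) = [A,A]` has vanishing `p`-th power, then
`(x*y)^p = x^p * y^p` for all `x, y ∈ A`. -/
theorem statement1 {k A : Type*} [Field k] [Ring A] [Algebra k A]
    {p : ℕ} (hp : p.Prime) (hp2 : 2 < p) [CharP k p]
    (hlcs : lcs k A p = ⊥)
    (hA2 : ∀ c ∈ lcs k A 2, c ^ p = 0) :
    ∀ x y : A, (x * y) ^ p = x ^ p * y ^ p := by
  have h2 : (2 : k) ≠ 0 := Ring.two_ne_zero (ringChar.eq k p ▸ hp2.ne')
  have hadd := add_pow_char_of_lcs_eq_bot hp hlcs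
  exact mul_pow_of_add_pow_of_commute_pow h2 hadd (commute_pow_char_of_lcs_eq_bot hp hlcs)
    fun x y => mul_pow_comm_of_add_pow hadd (hA2 _ (commutator_mem_lcs x Submodule.mem_top))
end

section
/- In any associative ring of characteristic p, for all elements x and y one has [x^p, y] = (ad x)^p (y), where ad x denotes the map z ↦ xz − zx. -/
/-- In any associative ring of characteristic `p`, for all elements `x` and `y`
one has `[x^p, y] = (ad x)^p (y)`, where `ad x : z ↦ x*z - z*x`. -/
theorem statement3 {R : Type*} [Ring R] {p : ℕ} (hp : p.Prime) [CharP R p]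
    (x y : R) :
    x ^ p * y - y * x ^ p = (fun z => x * z - z * x)^[p] y := by
  haveI : Fact p.Prime := ⟨hp⟩
  haveI : CharP (Module.End ℤ R) p := by
    constructor
    intro n
    rw [← CharP.cast_eq_zero_iff R p n]
    constructor
    · intro h
      have := congrArg (fun f : Module.End ℤ R => f 1) h
      simpa using this
    · intro h
      ext z
      simp [Module.End.natCast_apply, ← Nat.cast_smul_eq_nsmul R, h]
  have key : (LinearMap.mulLeft ℤ x - LinearMap.mulRight ℤ x) ^ p
      = LinearMap.mulLeft ℤ (x ^ p) - LinearMap.mulRight ℤ (x ^ p) := by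
    rw [sub_pow_char_of_commute p (LinearMap.commute_mulLeft_right x x),
      LinearMap.pow_mulLeft, LinearMap.pow_mulRight]
  have := congrArg (fun f : Module.End ℤ R => f y) key.symm
  simp only [LinearMap.sub_apply, LinearMap.mulLeft_apply, LinearMap.mulRight_apply] at this
  rw [this, Module.End.pow_apply]
  congr 1
end

section
/- Let k be a field of characteristic p > 2, W a finite-dimensional k-vector space, and A = k[W*]/m^{[p]} the quotient of the polynomial algebra on W by the ideal generated by p-th powers of elements of the augmentation ideal m. Suppose A carries a Poisson bracket for which the Hamiltonian vector fields generate all k-linear derivations of A as an A-module. Then the only Poisson ideals of A are 0 and A itself. -/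
set_option synthInstance.maxHeartbeats 1000000
set_option maxHeartbeats 1000000

/-- The finite-dimensional local Artin algebra `A = k[W*]/m^[p]`:
the polynomial algebra on an `n`-dimensional vector space modulo the ideal
generated by `p`-th powers of elements of the augmentation ideal `m`. -/
abbrev truncA (k : Type*) [Field k] (p n : ℕ) : Type _ :=
  MvPolynomial (Fin n) k ⧸
    Ideal.span ((· ^ p) ''
      {f : MvPolynomial (Fin n) k | MvPolynomial.constantCoeff f = 0})

/-!
Hamiltonian derivations generate all derivations, so a Poisson ideal `I` is stable under
every derivation, in particular under the partial derivatives `∂ᵢ`, which descend to `A`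
because they kill `p`-th powers. Every element of `A` has a representative `f` with all
exponents `< p`. If `I` is proper then such an `f` with `[f] ∈ I` has zero constant term,
since otherwise `[f]` would be a unit; applying `∂ᵢ` lowers a monomial `x^α` to
`αᵢ x^(α - eᵢ)` with `αᵢ ≠ 0` in `k`, so by induction on `α` every coefficient of `f`
vanishes, and `I = 0`.
-/

open MvPolynomial

theorem Derivation.apply_mem_of_mem_span {R A : Type*} [CommSemiring R] [CommRing A]
    [Algebra R A] {S : Set (Derivation R A A)} {I : Ideal A}
    (hS : ∀ D ∈ S, ∀ a ∈ I, D a ∈ I) {D : Derivation R A A} (hD : D ∈ Submodule.span A S)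
    {a : A} (ha : a ∈ I) : D a ∈ I := by
  induction hD using Submodule.span_induction with
  | mem D hD => exact hS D hD a ha
  | zero => simp
  | add D₁ D₂ _ _ h₁ h₂ => exact I.add_mem h₁ h₂
  | smul b D _ h => exact I.mul_mem_left b h

theorem Derivation.apply_mem_span_image_pow {R A : Type*} [CommSemiring R] [CommRing A]
    [Algebra R A] (p : ℕ) [CharP A p] (D : Derivation R A A) (S : Set A) {x : A}
    (hx : x ∈ Ideal.span ((· ^ p) '' S)) : D x ∈ Ideal.span ((· ^ p) '' S) := by
  induction hx using Submodule.span_induction with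
  | mem _ hx =>
    obtain ⟨f, -, rfl⟩ := hx
    simp [D.leibniz_pow, nsmul_eq_mul]
  | zero => simp
  | add _ _ _ _ hx hy => simpa using add_mem hx hy
  | smul a x hx ihx =>
    rw [smul_eq_mul, D.leibniz, smul_eq_mul, smul_eq_mul]
    exact add_mem (Ideal.mul_mem_left _ _ ihx) (Ideal.mul_mem_right _ _ hx)

theorem MvPolynomial.pderiv_mem_restrictDegree {R σ : Type*} [CommSemiring R] {d : ℕ}
    {f : MvPolynomial σ R} (hf : f ∈ restrictDegree σ R d) (i : σ) :
    pderiv i f ∈ restrictDegree σ R d := by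
  rw [mem_restrictDegree] at hf ⊢
  intro β hβ j
  have hcoeff : coeff (β + Finsupp.single i 1) f ≠ 0 :=
    left_ne_zero_of_mul (by rw [← coeff_pderiv]; exact mem_support_iff.mp hβ)
  have := hf _ (mem_support_iff.mpr hcoeff) j
  rw [Finsupp.add_apply] at this
  omega

namespace truncA

variable {k : Type*} [Field k] {p n : ℕ}

noncomputable abbrev ideal (k : Type*) [Field k] (p n : ℕ) : Ideal (MvPolynomial (Fin n) k) :=
  Ideal.span ((· ^ p) '' {f : MvPolynomial (Fin n) k | constantCoeff f = 0})

local notation "mk" => Ideal.Quotient.mk (ideal k p n)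

theorem monomial_mem_ideal {α : Fin n →₀ ℕ} (c : k) {i : Fin n} (h : p ≤ α i) :
    monomial α c ∈ ideal k p n := by
  have hle : Finsupp.single i p ≤ α := Finsupp.single_le_iff.mpr h
  have hX : (X i : MvPolynomial (Fin n) k) ^ p ∈ ideal k p n :=
    Ideal.subset_span ⟨X i, by simp, rfl⟩
  rw [← tsub_add_cancel_of_le hle, ← mul_one c, ← monomial_mul, ← X_pow_eq_monomial]
  exact Ideal.mul_mem_left _ _ hX

theorem exists_mem_restrictDegree_mk_eq (x : truncA k p n) :
    ∃ g ∈ restrictDegree (Fin n) k (p - 1), mk g = x := by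
  obtain ⟨f, rfl⟩ := Ideal.Quotient.mk_surjective x
  induction f using MvPolynomial.induction_on' with
  | monomial α c =>
    by_cases hα : ∀ i, α i ≤ p - 1
    · refine ⟨monomial α c, (mem_restrictDegree _ _ _).mpr fun β hβ => ?_, rfl⟩
      rwa [Finset.mem_singleton.mp (support_monomial_subset hβ)]
    · obtain ⟨i, hi⟩ := not_forall.mp hα
      refine ⟨0, zero_mem _, ?_⟩
      rw [map_zero, eq_comm, Ideal.Quotient.eq_zero_iff_mem]
      exact monomial_mem_ideal c (i := i) (by omega)
  | add f g hf hg =>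
    obtain ⟨f', hf', hff'⟩ := hf
    obtain ⟨g', hg', hgg'⟩ := hg
    exact ⟨f' + g', add_mem hf' hg', by rw [map_add, map_add, hff', hgg']⟩

theorem isUnit_mk_of_constantCoeff_ne_zero {f : MvPolynomial (Fin n) k}
    (hf : constantCoeff f ≠ 0) : IsUnit (mk f) := by
  have hnil : IsNilpotent (mk (f - C (constantCoeff f))) := by
    refine ⟨p, ?_⟩
    rw [← map_pow, Ideal.Quotient.eq_zero_iff_mem]
    exact Ideal.subset_span ⟨_, by simp, rfl⟩
  have hunit : IsUnit (mk (C (constantCoeff f))) :=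
    (isUnit_iff_ne_zero.mpr hf).map ((Ideal.Quotient.mk _).comp C)
  simpa using hnil.isUnit_add_left_of_commute hunit (Commute.all _ _)

variable (k p n) in
noncomputable def pderiv [CharP k p] (i : Fin n) : Derivation k (truncA k p n) (truncA k p n) :=
  Derivation.liftOfSurjective (f := Ideal.Quotient.mkₐ k (ideal k p n))
    (Ideal.Quotient.mkₐ_surjective k _) (d := MvPolynomial.pderiv i) fun x hx => by
      rw [Ideal.Quotient.mkₐ_eq_mk, Ideal.Quotient.eq_zero_iff_mem] at hx ⊢
      exact (MvPolynomial.pderiv i).apply_mem_span_image_pow p _ hx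

theorem pderiv_mk [CharP k p] (i : Fin n) (f : MvPolynomial (Fin n) k) :
    pderiv k p n i (mk f) = mk (MvPolynomial.pderiv i f) := by
  unfold pderiv
  exact Derivation.liftOfSurjective_apply _ _ f

theorem eq_zero_of_mk_mem [CharP k p] {I : Ideal (truncA k p n)} (hI : I ≠ ⊤)
    (hder : ∀ i, ∀ a ∈ I, pderiv k p n i a ∈ I) {f : MvPolynomial (Fin n) k}
    (hf : f ∈ restrictDegree (Fin n) k (p - 1)) (hfI : mk f ∈ I) : f = 0 := by
  ext α
  induction α using WellFoundedLT.induction generalizing f with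
  | ind α ih =>
    rw [coeff_zero]
    by_cases hα : α = 0
    · subst hα
      by_contra hc
      exact hI (Ideal.eq_top_of_isUnit_mem _ hfI (isUnit_mk_of_constantCoeff_ne_zero hc))
    obtain ⟨i, hi⟩ : ∃ i, α i ≠ 0 := by simpa [Finsupp.ext_iff] using hα
    set β := α - Finsupp.single i 1
    have hβα : β + Finsupp.single i 1 = α :=
      tsub_add_cancel_of_le (Finsupp.single_le_iff.mpr (Nat.one_le_iff_ne_zero.mpr hi))
    have hβ : β < α := by
      rw [← hβα]
      exact lt_add_of_pos_right _ (pos_iff_ne_zero.mpr (Finsupp.single_ne_zero.mpr one_ne_zero))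
    have hderiv := ih β hβ (pderiv_mem_restrictDegree hf i) (pderiv_mk i f ▸ hder i _ hfI)
    rw [coeff_pderiv, hβα, coeff_zero] at hderiv
    by_contra hc
    have hαi : α i ≤ p - 1 := (mem_restrictDegree _ _ _).mp hf α (mem_support_iff.mpr hc) i
    have hcast : (β i : k) + 1 = (α i : ℕ) := by
      rw [← hβα, Finsupp.add_apply, Finsupp.single_eq_same, Nat.cast_add, Nat.cast_one]
    refine mul_ne_zero hc ?_ hderiv
    rw [hcast, Ne, CharP.cast_eq_zero_iff k p]
    exact Nat.not_dvd_of_pos_of_lt (Nat.pos_of_ne_zero hi) (by omega)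

end truncA

theorem statement8_general {k : Type*} [Field k]
    {p : ℕ} [CharP k p] (n : ℕ)
    (bra : truncA k p n → truncA k p n → truncA k p n)
    (H : truncA k p n → Derivation k (truncA k p n) (truncA k p n))
    (hH : ∀ f g : truncA k p n, H f g = bra f g)
    (hgen : Submodule.span (truncA k p n) (Set.range H) = ⊤) :
    ∀ I : Ideal (truncA k p n),
      (∀ a ∈ I, ∀ f : truncA k p n, bra f a ∈ I) → I = ⊥ ∨ I = ⊤ := by
  intro I hI
  refine or_iff_not_imp_right.mpr fun hItop => (Submodule.eq_bot_iff I).mpr fun x hx => ?_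
  have hder (D : Derivation k (truncA k p n) (truncA k p n)) {a} (ha : a ∈ I) : D a ∈ I :=
    Derivation.apply_mem_of_mem_span (by rintro _ ⟨f, rfl⟩ a ha; exact hH f a ▸ hI a ha f)
      (hgen ▸ Submodule.mem_top) ha
  obtain ⟨g, hg, rfl⟩ := truncA.exists_mem_restrictDegree_mk_eq x
  rw [truncA.eq_zero_of_mk_mem hItop (fun i _ => hder _) hg hx, map_zero]

/-- Let `k` be a field of characteristic `p > 2`, `W` an `n`-dimensional
`k`-vector space, and `A = k[W*]/m^[p]`.  Suppose `A` carries a Poisson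
bracket whose Hamiltonian derivations `H f = {f, -}` generate all `k`-linear
derivations of `A` as an `A`-module.  Then the only Poisson ideals of `A` are
`0` and `A`. -/
theorem statement8 {k : Type*} [Field k]
    {p : ℕ} (hp : p.Prime) (hp2 : 2 < p) [CharP k p] (n : ℕ)
    (bra : truncA k p n → truncA k p n → truncA k p n)
    (H : truncA k p n → Derivation k (truncA k p n) (truncA k p n))
    (hH : ∀ f g : truncA k p n, H f g = bra f g)
    (hgen : Submodule.span (truncA k p n) (Set.range H) = ⊤) :
    ∀ I : Ideal (truncA k p n),
      (∀ a ∈ I, ∀ f : truncA k p n, bra f a ∈ I) → I = ⊥ ∨ I = ⊤ :=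
  statement8_general n bra H hH hgen
end

section
/- Let A_h be a flat h-adically complete k[[h]]-algebra with commutative quotient A = A_h/h, where char k = p > 2, and suppose s : A_h^{(1)} → A_h is a Frobenius-constant splitting (a multiplicative, additive, central, k[h]-linear map with s(h) = 0 and s(a) ≡ a^p mod h^{p-1} for all a). Then the operation x^{[p]} := (x^p − s(x))/h^{p-1} is well-defined on A_h (i.e. x^p − s(x) is divisible by h^{p-1}), and it satisfies {x^{[p]}, y} = (ad x)^p(y) for all x, y ∈ A_h, where {a,b} = (ab − ba)/h and ad x(z) = {x,z}. -/
/-- Let `A_h` be a flat, `h`-adically complete `k[[h]]`-algebra with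
commutative quotient `A = A_h/h` (`char k = p > 2`), with bracket
`{a,b} = (ab - ba)/h`, and let `s : A_h → A_h` be a Frobenius-constant
splitting: additive, multiplicative, central, Frobenius-semilinear over `k`,
vanishing on `h·A_h`, and with `s(a) ≡ a^p mod h^(p-1)`.  Then
`x^[p] := (x^p - s(x))/h^(p-1)` is well defined (i.e. `x^p - s(x)` is
divisible by `h^(p-1)`) and satisfies `{x^[p], y} = (ad x)^p (y)`. -/
theorem statement11 {k Ah : Type*} [Field k] [Ring Ah]
    [Algebra (PowerSeries k) Ah]
    {p : ℕ} (hp : p.Prime) (hp2 : 2 < p) [CharP k p]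
    [Module.Flat (PowerSeries k) Ah]
    [IsAdicComplete (Ideal.span {(PowerSeries.X : PowerSeries k)}) Ah]
    (h : Ah) (hdef : h = algebraMap (PowerSeries k) Ah PowerSeries.X)
    -- the bracket {a,b} = (ab - ba)/h (its existence encodes commutativity
    -- of A_h/h; it is unique since A_h is flat, i.e. h-torsion free)
    (bra : Ah → Ah → Ah)
    (hbra : ∀ a b : Ah, h * bra a b = a * b - b * a)
    -- the Frobenius-constant splitting s
    (s : Ah → Ah)
    (hsadd : ∀ a b : Ah, s (a + b) = s a + s b)
    (hsmul : ∀ a b : Ah, s (a * b) = s a * s b)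
    (hssemilin : ∀ (c : k) (a : Ah), s ((algebraMap (PowerSeries k) Ah
      (PowerSeries.C c)) * a) = (algebraMap (PowerSeries k) Ah
      (PowerSeries.C (c ^ p))) * s a)
    (hscent : ∀ a y : Ah, s a * y = y * s a)
    (hsh : ∀ a : Ah, s (h * a) = 0)
    (hsfr : ∀ a : Ah, ∃ d : Ah, a ^ p - s a = h ^ (p - 1) * d) :
    ∀ x : Ah,
      (∃ w : Ah, h ^ (p - 1) * w = x ^ p - s x) ∧
      (∀ w : Ah, h ^ (p - 1) * w = x ^ p - s x →
        ∀ y : Ah, bra w y = (fun z => bra x z)^[p] y) := by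
  intro x
  obtain ⟨d, hd⟩ := hsfr x
  rcases subsingleton_or_nontrivial Ah with htriv | hnt
  · exact ⟨⟨d, hd.symm⟩, fun w hw y => Subsingleton.elim _ _⟩
  -- `h` is regular on `Ah` by flatness
  have hXreg : IsSMulRegular (PowerSeries k) (PowerSeries.X : PowerSeries k) := by
    intro a b hab
    exact mul_left_cancel₀ PowerSeries.X_ne_zero (by simpa [smul_eq_mul] using hab)
  have hAreg : IsSMulRegular Ah (PowerSeries.X : PowerSeries k) :=
    (hXreg.lTensor (M := Ah)).of_injective
      (TensorProduct.rid (PowerSeries k) Ah).symm.toLinearMap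
      (TensorProduct.rid (PowerSeries k) Ah).symm.injective
  have hreg : ∀ a b : Ah, h * a = h * b → a = b := by
    intro a b hab
    apply hAreg
    simpa [Algebra.smul_def, ← hdef] using hab
  have hregpow : ∀ (n : ℕ) (a b : Ah), h ^ n * a = h ^ n * b → a = b := by
    intro n
    induction n with
    | zero => intro a b hab; simpa using hab
    | succ n ih =>
      intro a b hab
      refine hreg a b (ih _ _ ?_)
      rw [← mul_assoc, ← pow_succ, hab, ← mul_assoc, ← pow_succ]
  -- centrality of powers of h
  have hcen : ∀ (n : ℕ) (a : Ah), h ^ n * a = a * h ^ n := by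
    intro n a
    rw [hdef, ← map_pow, Algebra.commutes]
  -- characteristic p
  have hpAh : (p : Ah) = 0 := by
    have hk : ((p : ℕ) : PowerSeries k) = 0 := by
      rw [← map_natCast (PowerSeries.C : k →+* PowerSeries k) p, CharP.cast_eq_zero k p, map_zero]
    rw [← map_natCast (algebraMap (PowerSeries k) Ah) p, hk, map_zero]
  haveI : CharP Ah p := ⟨by
    intro n
    constructor
    · intro hn
      by_contra hnd
      have hk : ((n : ℕ) : k) ≠ 0 := fun hk0 => hnd ((CharP.cast_eq_zero_iff k p n).mp hk0)
      have hu : IsUnit ((n : ℕ) : PowerSeries k) := by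
        rw [← map_natCast (PowerSeries.C : k →+* PowerSeries k) n]
        exact (isUnit_iff_ne_zero.mpr hk).map _
      have hu2 : IsUnit ((n : ℕ) : Ah) := by
        rw [← map_natCast (algebraMap (PowerSeries k) Ah) n]
        exact hu.map _
      exact hu2.ne_zero hn
    · rintro ⟨m, rfl⟩
      rw [Nat.cast_mul, hpAh, zero_mul]⟩
  haveI : Fact p.Prime := ⟨hp⟩
  haveI : CharP (AddMonoid.End Ah) p := ⟨by
    intro n
    rw [← CharP.cast_eq_zero_iff Ah p n]
    constructor
    · intro he
      have := DFunLike.congr_fun he (1 : Ah)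
      simpa [AddMonoid.End.natCast_apply, nsmul_eq_mul] using this
    · intro h0
      refine DFunLike.ext _ _ fun z => ?_
      simp [AddMonoid.End.natCast_apply, nsmul_eq_mul, h0]⟩
  have hmove : ∀ (n : ℕ) (a b : Ah), h ^ n * (a * b) = a * (h ^ n * b) := by
    intro n a b
    rw [← mul_assoc, hcen n a, mul_assoc]
  -- the multiplicative adjoint D z = x*z - z*x and its p-th iterate
  set L : AddMonoid.End Ah := AddMonoidHom.mulLeft x with hL
  set R : AddMonoid.End Ah := AddMonoidHom.mulRight x with hR
  have hcomm : Commute L R := by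
    refine DFunLike.ext _ _ fun z => ?_
    show x * (z * x) = (x * z) * x
    rw [mul_assoc]
  have key : (L - R) ^ p = L ^ p - R ^ p := sub_pow_char_of_commute p hcomm
  have hLpow : ∀ (n : ℕ) (z : Ah), (L ^ n) z = x ^ n * z := by
    intro n
    induction n with
    | zero => intro z; simp [AddMonoid.End.one_apply]
    | succ n ih =>
      intro z
      rw [pow_succ', AddMonoid.End.coe_mul]
      show L ((L ^ n) z) = x ^ (n + 1) * z
      rw [ih]
      show x * (x ^ n * z) = x ^ (n + 1) * z
      rw [← mul_assoc, ← pow_succ']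
  have hRpow : ∀ (n : ℕ) (z : Ah), (R ^ n) z = z * x ^ n := by
    intro n
    induction n with
    | zero => intro z; simp [AddMonoid.End.one_apply]
    | succ n ih =>
      intro z
      rw [pow_succ', AddMonoid.End.coe_mul]
      show R ((R ^ n) z) = z * x ^ (n + 1)
      rw [ih]
      show (z * x ^ n) * x = z * x ^ (n + 1)
      rw [mul_assoc, ← pow_succ]
  have hEpow : ∀ (n : ℕ) (z : Ah), ((L - R) ^ n) z = (fun t => x * t - t * x)^[n] z := by
    intro n
    induction n with
    | zero => intro z; simp [AddMonoid.End.one_apply]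
    | succ n ih =>
      intro z
      rw [pow_succ', AddMonoid.End.coe_mul, Function.iterate_succ_apply']
      show (L - R) (((L - R) ^ n) z) = _
      rw [ih, (show ∀ (f g : AddMonoid.End Ah) (a : Ah), (f - g) a = f a - g a from fun _ _ _ => rfl)]
      rfl
  have hDiter : ∀ z : Ah, (fun t => x * t - t * x)^[p] z = x ^ p * z - z * x ^ p := by
    intro z
    rw [← hEpow, key, (show ∀ (f g : AddMonoid.End Ah) (a : Ah), (f - g) a = f a - g a from fun _ _ _ => rfl), hLpow, hRpow]
  -- relating iterates of bra x to iterates of D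
  have hbrit : ∀ (n : ℕ) (z : Ah), h ^ n * (fun t => bra x t)^[n] z
      = (fun t => x * t - t * x)^[n] z := by
    intro n
    induction n with
    | zero => intro z; simp
    | succ n ih =>
      intro z
      rw [Function.iterate_succ_apply', Function.iterate_succ_apply']
      rw [pow_succ, mul_assoc, hbra, mul_sub, hmove n x _, ← mul_assoc (h ^ n), ih]
  -- main computation
  refine ⟨⟨d, hd.symm⟩, fun w hw y => ?_⟩
  apply hregpow p
  have h1 : h ^ p * bra w y = x ^ p * y - y * x ^ p := by
    have hps : p - 1 + 1 = p := Nat.succ_pred_eq_of_pos hp.pos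
    calc h ^ p * bra w y = h ^ (p - 1) * (h * bra w y) := by
          rw [← mul_assoc, ← pow_succ, hps]
      _ = h ^ (p - 1) * (w * y - y * w) := by rw [hbra]
      _ = (h ^ (p - 1) * w) * y - y * (h ^ (p - 1) * w) := by
          rw [mul_sub, hmove (p - 1) y w, ← mul_assoc]
      _ = (x ^ p - s x) * y - y * (x ^ p - s x) := by rw [hw]
      _ = x ^ p * y - y * x ^ p := by
          rw [sub_mul, mul_sub, hscent x y, sub_sub_sub_cancel_right]
  have h2 : h ^ p * (fun z => bra x z)^[p] y = x ^ p * y - y * x ^ p := by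
    rw [hbrit p y, hDiter]
  rw [h1, h2]
end
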